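/- For all nonnegative integers m and n, B_{1+2m}(n) := Σ_{k=1}^{n} (−1)^(k−1) · C(2n, n−k) · k^(1+2m) satisfies B_{1+2m}(n) = Σ_{ℓ=0}^{m} (−1)^ℓ · ⟨2n⟩_{2ℓ} · C(2n−2ℓ−2, n−ℓ−1) · σ_{m,ℓ}(n), where binomial coefficients C(a, b) with a < 0, b < 0, or b > a are taken to be 0. -/

import Mathlib

open Finset

/-- Falling factorial `⟨x⟩_n = x(x-1)⋯(x-n+1)`. -/
noncomputable def ffact (x : ℝ) : ℕ → ℝ
  | 0 => 1
  | n + 1 => ffact x n * (x - n)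

/-- `σ_{m,ℓ}(y)`: the complete homogeneous symmetric polynomial of degree `m - ℓ`
evaluated at `(y-0)^2, (y-1)^2, …, (y-ℓ)^2`, i.e. the sum over weakly increasing
sequences `0 ≤ k_1 ≤ ⋯ ≤ k_{m-ℓ} ≤ ℓ` of `∏ i, (y - k_i)^2`. -/
noncomputable def csigma (m ℓ : ℕ) (y : ℝ) : ℝ :=
  ∑ k ∈ Finset.univ.filter (fun k : Fin (m - ℓ) → Fin (ℓ + 1) => Monotone k),
    ∏ i, (y - (k i : ℝ)) ^ 2

/-!
Write `L(m, n)` for the left-hand side and `R(m, n)` for the right-hand side. Both satisfy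
`X(m+1, n+1) = (n+1)² X(m, n+1) - (2n+2)(2n+1) X(m, n)`, both vanish at `n = 0`, and they agree
at `m = 0`, where a telescoping sum gives `L(0, n+1) = C(2n, n)`.

On the left the recurrence comes from `k² = (n+1)² - (n+1-k)(n+1+k)` and
`(n+1-k)(n+1+k) C(2n+2, n+1-k) = (2n+2)(2n+1) C(2n, n-k)`. On the right it comes from
`⟨2n+2⟩_{2ℓ+2} = (2n+2)(2n+1) ⟨2n⟩_{2ℓ}` and from splitting the complete homogeneous polynomial
according to whether the first variable occurs:
`h_{d+1}(x₀, …, x_ℓ) = x₀ h_d(x₀, …, x_ℓ) + h_{d+1}(x₁, …, x_ℓ)`, applied to `x_j = (n+1-j)²`,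
for which `(x₁, …, x_ℓ)` are the variables of `σ` at `n`.
-/

section CompleteHom

variable {R : Type*} [CommSemiring R]

/-- The complete homogeneous symmetric polynomial `h_d(x₀, …, x_{ℓ-1})`. -/
def completeHom (d ℓ : ℕ) (x : ℕ → R) : R :=
  ∑ k ∈ univ.filter (fun k : Fin d → Fin ℓ => Monotone k), ∏ i, x (k i)

theorem completeHom_zero_left (ℓ : ℕ) (x : ℕ → R) : completeHom 0 ℓ x = 1 := by
  simp [completeHom, Subsingleton.monotone]

theorem completeHom_succ_zero (d : ℕ) (x : ℕ → R) : completeHom (d + 1) 0 x = 0 := by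
  simp [completeHom]

theorem completeHom_succ_succ (d ℓ : ℕ) (x : ℕ → R) :
    completeHom (d + 1) (ℓ + 1) x =
      x 0 * completeHom d (ℓ + 1) x + completeHom (d + 1) ℓ (fun j => x (j + 1)) := by
  unfold completeHom
  rw [← sum_filter_add_sum_filter_not _ (fun k : Fin (d + 1) → Fin (ℓ + 1) => k 0 = 0),
    filter_filter, filter_filter, mul_sum]
  congr 1
  · refine sum_nbij' Fin.tail (Matrix.vecCons 0) ?_ ?_ ?_ ?_ ?_ <;>
      simp only [mem_filter, mem_univ, true_and]
    · rintro k ⟨hk, -⟩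
      exact hk.comp Fin.strictMono_succ.monotone
    · refine fun k hk => ⟨fun i j hij => ?_, rfl⟩
      induction i using Fin.cases with
      | zero => exact Fin.zero_le _
      | succ i =>
        induction j using Fin.cases with
        | zero => exact absurd hij (Fin.succ_pos i).not_ge
        | succ j => exact hk (Fin.succ_le_succ_iff.1 hij)
    · rintro k ⟨-, hk0⟩
      rw [← hk0]
      exact Fin.cons_self_tail k
    · exact fun k _ => Fin.tail_cons _ _
    · rintro k ⟨-, hk0⟩
      rw [Fin.prod_univ_succ, hk0]
      rfl
  · have hpos : ∀ k : Fin (d + 1) → Fin (ℓ + 1), Monotone k ∧ ¬k 0 = 0 → ∀ i, 0 < k i :=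
      fun k hk i => Fin.pos_iff_ne_zero.2 fun hi =>
        hk.2 (nonpos_iff_eq_zero.1 (hi ▸ hk.1 (Fin.zero_le i)))
    refine sum_bij' (fun k hk i => (k i).pred (hpos k (mem_filter.1 hk).2 i).ne')
      (fun k _ => Fin.succ ∘ k) ?_ ?_ ?_ ?_ ?_
    · intro k hk
      simp only [mem_filter, mem_univ, true_and] at hk ⊢
      exact fun i j hij => Fin.pred_le_pred_iff.2 (hk.1 hij)
    · intro k hk
      simp only [mem_filter, mem_univ, true_and] at hk ⊢
      exact ⟨Fin.strictMono_succ.monotone.comp hk, Fin.succ_ne_zero _⟩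
    · exact fun k _ => funext fun i => Fin.succ_pred _ _
    · exact fun k _ => funext fun i => Fin.pred_succ _
    · intro k hk
      refine prod_congr rfl fun i _ => ?_
      have hi : 0 < (k i : ℕ) := hpos k (mem_filter.1 hk).2 i
      simp only [Fin.val_pred, Nat.sub_add_cancel hi]

theorem sum_antidiagonal_mul_completeHom_succ (c x : ℕ → R) (m : ℕ) :
    ∑ p ∈ antidiagonal (m + 1), c p.1 * completeHom p.2 (p.1 + 1) x =
      x 0 * ∑ p ∈ antidiagonal m, c p.1 * completeHom p.2 (p.1 + 1) x +
        ∑ p ∈ antidiagonal m, c (p.1 + 1) * completeHom p.2 (p.1 + 1) (fun j => x (j + 1)) := by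
  calc _ = c (m + 1) + ∑ p ∈ antidiagonal m, c p.1 * completeHom (p.2 + 1) (p.1 + 1) x := by
        rw [Nat.sum_antidiagonal_succ', completeHom_zero_left, mul_one]
    _ = x 0 * ∑ p ∈ antidiagonal m, c p.1 * completeHom p.2 (p.1 + 1) x +
          ∑ p ∈ antidiagonal (m + 1), c p.1 * completeHom p.2 p.1 (fun j => x (j + 1)) := by
        rw [Nat.sum_antidiagonal_succ' (f := fun p => c p.1 * completeHom p.2 p.1 _)]
        simp only [completeHom_succ_succ, completeHom_zero_left, mul_add, sum_add_distrib, mul_sum,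
          mul_one, mul_left_comm (x 0)]
        abel
    _ = _ := by
        rw [Nat.sum_antidiagonal_succ, completeHom_succ_zero, mul_zero, zero_add]

end CompleteHom

theorem csigma_eq_completeHom (m ℓ : ℕ) (y : ℝ) :
    csigma m ℓ y = completeHom (m - ℓ) (ℓ + 1) (fun j : ℕ => (y - j) ^ 2) :=
  rfl

theorem ffact_succ_left (x : ℝ) (k : ℕ) : ffact x (k + 1) = x * ffact (x - 1) k := by
  induction k with
  | zero => simp [ffact]
  | succ k ih =>
    rw [ffact, ih, ffact]
    push_cast
    ring

theorem add_two_mul_add_one_mul_choose_eq (M j : ℕ) :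
    (M + 2) * (M + 1) * M.choose j = (M + 2).choose (j + 1) * (j + 1) * (M + 1 - j) := by
  have h := Nat.choose_mul_succ_eq (M + 1) (j + 1)
  rw [Nat.add_sub_add_right] at h
  rw [mul_assoc, Nat.add_one_mul_choose_eq, ← mul_assoc, mul_comm (M + 2), h]
  ring

theorem choose_add_two_add_two (M j : ℕ) :
    (M + 2).choose (j + 2) = M.choose j + 2 * M.choose (j + 1) + M.choose (j + 2) := by
  simp only [Nat.choose_succ_succ]
  ring

theorem choose_mul_sq_sub_sq (n k : ℕ) (hk : k ≤ n) :
    ((2 * n + 2).choose (n + 1 - k) : ℝ) * (((n : ℝ) + 1) ^ 2 - (k : ℝ) ^ 2) =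
      (2 * n + 2) * (2 * n + 1) * (2 * n).choose (n - k) := by
  have h := congrArg (Nat.cast : ℕ → ℝ) (add_two_mul_add_one_mul_choose_eq (2 * n) (n - k))
  rw [show n - k + 1 = n + 1 - k by omega, show 2 * n + 1 - (n - k) = n + 1 + k by omega] at h
  push_cast [Nat.cast_sub hk, Nat.cast_sub (by omega : k ≤ n + 1)] at h
  linear_combination -h

noncomputable def oddMoment (m n : ℕ) : ℝ :=
  ∑ k ∈ Icc 1 n, (-1 : ℝ) ^ (k - 1) * ((2 * n).choose (n - k) : ℝ) * (k : ℝ) ^ (1 + 2 * m)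

theorem oddMoment_zero_right (m : ℕ) : oddMoment m 0 = 0 := by
  simp [oddMoment]

theorem oddMoment_succ_succ (m n : ℕ) :
    oddMoment (m + 1) (n + 1) =
      ((n : ℝ) + 1) ^ 2 * oddMoment m (n + 1) - (2 * n + 2) * (2 * n + 1) * oddMoment m n := by
  have term : ∀ k ∈ Icc 1 n,
      (-1 : ℝ) ^ (k - 1) * ((2 * (n + 1)).choose (n + 1 - k) : ℝ) * (k : ℝ) ^ (1 + 2 * (m + 1)) =
        ((n : ℝ) + 1) ^ 2 *
            ((-1 : ℝ) ^ (k - 1) * ((2 * (n + 1)).choose (n + 1 - k) : ℝ) * (k : ℝ) ^ (1 + 2 * m)) -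
          (2 * n + 2) * (2 * n + 1) *
            ((-1 : ℝ) ^ (k - 1) * ((2 * n).choose (n - k) : ℝ) * (k : ℝ) ^ (1 + 2 * m)) := by
    intro k hk
    have h := choose_mul_sq_sub_sq n k (mem_Icc.1 hk).2
    rw [show 2 * (n + 1) = 2 * n + 2 by ring]
    linear_combination -(-1 : ℝ) ^ (k - 1) * (k : ℝ) ^ (1 + 2 * m) * h
  simp only [oddMoment]
  rw [sum_Icc_succ_top (by omega), sum_Icc_succ_top (by omega), sum_congr rfl term,
    sum_sub_distrib, ← mul_sum, ← mul_sum]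
  simp only [Nat.sub_self, Nat.choose_zero_right]
  push_cast
  ring

theorem oddMoment_zero_succ (N : ℕ) : oddMoment 0 (N + 1) = (2 * N).choose N := by
  -- An antidifference of the summand, read off from `C(2N+2, N+i+2) = C(2N, N+i) + 2 C(2N, N+i+1)
  -- + C(2N, N+i+2)`; the symmetric index `N+i+2` (rather than `N-i`) avoids truncated subtraction.
  set G : ℕ → ℝ := fun i =>
    (-1) ^ i * ((i + 1) * (2 * N).choose (N + i) + i * (2 * N).choose (N + i + 1)) with hG
  have term : ∀ i ∈ range (N + 1),
      (-1 : ℝ) ^ i * ((2 * (N + 1)).choose (N - i) : ℝ) * (i + 1) = G i - G (i + 1) := by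
    intro i hi
    have hsymm : 2 * (N + 1) = N - i + (N + i + 2) := by have := mem_range.1 hi; omega
    rw [Nat.choose_symm_of_eq_add hsymm, show 2 * (N + 1) = 2 * N + 2 by ring,
      choose_add_two_add_two]
    simp only [hG]
    push_cast
    ring_nf
  calc oddMoment 0 (N + 1)
      = ∑ i ∈ range (N + 1), (-1 : ℝ) ^ i * ((2 * (N + 1)).choose (N - i) : ℝ) * (i + 1) := by
        rw [oddMoment, ← Ico_add_one_right_eq_Icc, sum_Ico_eq_sum_range]
        refine sum_congr rfl fun i _ => ?_
        rw [show 1 + i - 1 = i by omega, show N + 1 - (1 + i) = N - i by omega]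
        push_cast
        ring
    _ = G 0 - G (N + 1) := by rw [sum_congr rfl term, sum_range_sub']
    _ = (2 * N).choose N := by
        simp [hG, Nat.choose_eq_zero_of_lt (by omega : 2 * N < N + (N + 1)),
          Nat.choose_eq_zero_of_lt (by omega : 2 * N < N + (N + 1) + 1)]

noncomputable def momentCoeff (n ℓ : ℕ) : ℝ :=
  (-1 : ℝ) ^ ℓ * ffact (2 * (n : ℝ)) (2 * ℓ) *
    (if ℓ + 1 ≤ n then ((2 * n - 2 * ℓ - 2).choose (n - ℓ - 1) : ℝ) else 0)

theorem momentCoeff_zero_left (ℓ : ℕ) : momentCoeff 0 ℓ = 0 := by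
  simp [momentCoeff]

theorem momentCoeff_succ_zero (N : ℕ) : momentCoeff (N + 1) 0 = (2 * N).choose N := by
  simp [momentCoeff, ffact, show 2 * (N + 1) - 2 = 2 * N by omega]

theorem momentCoeff_succ_succ (n ℓ : ℕ) :
    momentCoeff (n + 1) (ℓ + 1) = -((2 * n + 2) * (2 * n + 1)) * momentCoeff n ℓ := by
  have hffact : ffact (2 * ((n + 1 : ℕ) : ℝ)) (2 * (ℓ + 1)) =
      (2 * n + 2) * (2 * n + 1) * ffact (2 * (n : ℝ)) (2 * ℓ) := by
    rw [show 2 * (ℓ + 1) = 2 * ℓ + 1 + 1 by ring, ffact_succ_left, ffact_succ_left]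
    push_cast
    ring_nf
  have hchoose : 2 * (n + 1) - 2 * (ℓ + 1) - 2 = 2 * n - 2 * ℓ - 2 ∧
      n + 1 - (ℓ + 1) - 1 = n - ℓ - 1 := ⟨by omega, by omega⟩
  simp only [momentCoeff, hffact, hchoose, add_le_add_iff_right, pow_succ]
  ring

noncomputable def momentSum (m n : ℕ) : ℝ :=
  ∑ p ∈ antidiagonal m,
    momentCoeff n p.1 * completeHom p.2 (p.1 + 1) (fun j : ℕ => ((n : ℝ) - j) ^ 2)

theorem momentSum_zero_right (m : ℕ) : momentSum m 0 = 0 := by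
  simp [momentSum, momentCoeff_zero_left]

theorem momentSum_zero_succ (N : ℕ) : momentSum 0 (N + 1) = (2 * N).choose N := by
  simp [momentSum, momentCoeff_succ_zero, completeHom_zero_left]

theorem momentSum_succ_succ (m n : ℕ) :
    momentSum (m + 1) (n + 1) =
      ((n : ℝ) + 1) ^ 2 * momentSum m (n + 1) - (2 * n + 2) * (2 * n + 1) * momentSum m n := by
  have hshift : (fun j : ℕ => (((n + 1 : ℕ) : ℝ) - (j + 1 : ℕ)) ^ 2) =
      fun j : ℕ => ((n : ℝ) - j) ^ 2 := by
    funext j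
    push_cast
    ring
  have hcoeff : ∑ p ∈ antidiagonal m, momentCoeff (n + 1) (p.1 + 1) *
      completeHom p.2 (p.1 + 1) (fun j : ℕ => ((n : ℝ) - j) ^ 2) =
        -((2 * n + 2) * (2 * n + 1)) * momentSum m n := by
    simp only [momentCoeff_succ_succ, mul_assoc, ← mul_sum, momentSum]
  rw [momentSum, sum_antidiagonal_mul_completeHom_succ, hshift, hcoeff, ← momentSum]
  push_cast
  ring

theorem oddMoment_eq_momentSum (m n : ℕ) : oddMoment m n = momentSum m n := by
  induction m generalizing n with
  | zero =>
    cases n with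
    | zero => rw [oddMoment_zero_right, momentSum_zero_right]
    | succ N => rw [oddMoment_zero_succ, momentSum_zero_succ]
  | succ m ih =>
    cases n with
    | zero => rw [oddMoment_zero_right, momentSum_zero_right]
    | succ n => rw [oddMoment_succ_succ, momentSum_succ_succ, ih, ih]

theorem B_odd_moment (m n : ℕ) :
    ∑ k ∈ Finset.Icc 1 n,
        (-1 : ℝ) ^ (k - 1) * (((2 * n).choose (n - k) : ℝ)) * (k : ℝ) ^ (1 + 2 * m) =
      ∑ ℓ ∈ Finset.range (m + 1),
        (-1 : ℝ) ^ ℓ * ffact (2 * (n : ℝ)) (2 * ℓ) *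
          (if ℓ + 1 ≤ n then ((2 * n - 2 * ℓ - 2).choose (n - ℓ - 1) : ℝ) else 0) *
          csigma m ℓ (n : ℝ) := by
  have h := oddMoment_eq_momentSum m n
  rw [momentSum, Nat.sum_antidiagonal_eq_sum_range_succ
    (fun ℓ d => momentCoeff n ℓ * completeHom d (ℓ + 1) (fun j : ℕ => ((n : ℝ) - j) ^ 2))] at h
  simpa only [csigma_eq_completeHom, momentCoeff, oddMoment] using h
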